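/- If f : S → ℝ is convex on a simplex S with vertices p₀,…,pₙ and barycenter p̄, then f(p̄) ≤ (1/vol(S)) ∫_S f(x) dx ≤ (1/(n+1)) ∑ᵢ₌₀ⁿ f(pᵢ) (Hermite–Hadamard inequality on simplices). -/

import Mathlib

/-!
Let `λᵢ` be the barycentric coordinates of the simplex `S`. Permuting the vertices is an affine
symmetry of `S`, and an affine map sending `S` onto itself preserves volume (its Jacobian is
constant, so it must be `±1`). Hence all `∫_S λᵢ` are equal, and as `∑ λᵢ = 1` each is
`vol S / (n + 1)`; writing `x = ∑ λᵢ(x) pᵢ` shows that the barycenter of `S` is `p̄`.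
The upper bound integrates the pointwise Jensen bound `f x ≤ ∑ λᵢ(x) f(pᵢ)`; the lower bound
is Jensen's inequality for the normalized volume on `S`, whose barycenter is `p̄`.
-/

open MeasureTheory Set Finset

theorem Finset.centroid_eq_inv_card_smul_sum {k V ι : Type*} [DivisionRing k] [CharZero k]
    [AddCommGroup V] [Module k V] {s : Finset ι} (hs : s.Nonempty) (v : ι → V) :
    s.centroid k v = (#s : k)⁻¹ • ∑ i ∈ s, v i := by
  rw [centroid_def, affineCombination_eq_linear_combination _ _ _
    (s.sum_centroidWeights_eq_one_of_nonempty k hs), smul_sum]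
  simp [centroidWeights_apply]

/-- Unlike `ConvexOn.map_set_average_le`, no continuity of `g` on `s` is needed: a convex
function is continuous at interior points, which is enough to pass to the closure of its
epigraph. -/
theorem ConvexOn.map_setAverage_le_of_mem_interior {E α : Type*} [NormedAddCommGroup E]
    [NormedSpace ℝ E] [FiniteDimensional ℝ E] [MeasurableSpace α] {μ : Measure α} {t : Set α}
    {s : Set E} {g : E → ℝ} {f : α → E} (hg : ConvexOn ℝ s g)
    (hmem : ⨍ x in t, f x ∂μ ∈ interior s) (h₀ : μ t ≠ 0) (ht : μ t ≠ ⊤)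
    (hfs : ∀ᵐ x ∂μ.restrict t, f x ∈ s) (hfi : IntegrableOn f t μ)
    (hgi : IntegrableOn (fun x ↦ g (f x)) t μ) :
    g (⨍ x in t, f x ∂μ) ≤ ⨍ x in t, g (f x) ∂μ := by
  have hepi : (⨍ x in t, f x ∂μ, ⨍ x in t, g (f x) ∂μ) ∈
      closure {q : E × ℝ | q.1 ∈ s ∧ g q.1 ≤ q.2} := by
    rw [← average_pair hfi hgi]
    exact hg.convex_epigraph.set_average_mem_closure h₀ ht
      (hfs.mono fun x hx ↦ ⟨hx, le_rfl⟩) (hfi.prodMk hgi)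
  have hcont : ContinuousAt g (⨍ x in t, f x ∂μ) :=
    hg.continuousOn_interior.continuousAt (isOpen_interior.mem_nhds hmem)
  exact ContinuousWithinAt.closure_le hepi
    (hcont.comp_of_eq continuousAt_fst rfl).continuousWithinAt
    continuous_snd.continuousWithinAt fun q hq ↦ hq.2

section ChangeOfVariables

variable {E F : Type*} [NormedAddCommGroup E] [NormedSpace ℝ E] [FiniteDimensional ℝ E]
  [MeasurableSpace E] [BorelSpace E] (μ : Measure E) [μ.IsAddHaarMeasure]
  [NormedAddCommGroup F] [NormedSpace ℝ F]

theorem setIntegral_image_affineMap {T : E →ᵃ[ℝ] E} {s : Set E} (hs : MeasurableSet s)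
    (hT : InjOn T s) (g : E → F) :
    ∫ x in T '' s, g x ∂μ = ∫ x in s, |LinearMap.det T.linear| • g (T x) ∂μ :=
  integral_image_eq_integral_abs_det_fderiv_smul μ hs (fun _ _ ↦
    (⟨T, T.continuous_of_finiteDimensional⟩ : E →ᴬ[ℝ] E).hasFDerivAt.hasFDerivWithinAt) hT g

theorem setIntegral_comp_affineMap_of_image_eq {T : E →ᵃ[ℝ] E} {s : Set E}
    (hs : MeasurableSet s) (hT : InjOn T s) (hTs : T '' s = s) (h₀ : μ s ≠ 0) (h : μ s ≠ ⊤)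
    (g : E → F) :
    ∫ x in s, g (T x) ∂μ = ∫ x in s, g x ∂μ := by
  have hdet : |LinearMap.det T.linear| = 1 := by
    have hvol := setIntegral_image_affineMap μ hs hT (fun _ ↦ (1 : ℝ))
    simp only [hTs, smul_eq_mul, mul_one, setIntegral_const] at hvol
    exact (mul_eq_left₀ (ENNReal.toReal_ne_zero.mpr ⟨h₀, h⟩)).mp hvol.symm
  have hcov := setIntegral_image_affineMap μ hs hT g
  rw [hTs, hdet] at hcov
  simpa using hcov.symm

end ChangeOfVariables

namespace AffineBasis

variable {E : Type*} [NormedAddCommGroup E] [NormedSpace ℝ E] {ι : Type*} [Fintype ι]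
  (b : AffineBasis ι ℝ E) (σ : Equiv.Perm ι)

noncomputable def permuteVertices : E →ᵃ[ℝ] E :=
  (Fintype.linearCombination ℝ (b ∘ σ)).toAffineMap.comp b.coords

theorem permuteVertices_apply (x : E) :
    b.permuteVertices σ x = ∑ i, b.coord (σ.symm i) x • b i := by
  simp only [permuteVertices, AffineMap.comp_apply, LinearMap.coe_toAffineMap,
    Fintype.linearCombination_apply, coords_apply, Function.comp_apply]
  rw [← Equiv.sum_comp σ (fun i ↦ b.coord (σ.symm i) x • b i)]
  simp

theorem coord_permuteVertices (x : E) (i : ι) :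
    b.coord i (b.permuteVertices σ x) = b.coord (σ.symm i) x := by
  have hw : ∑ j, b.coord (σ.symm j) x = 1 := by
    rw [Equiv.sum_comp σ.symm (fun j ↦ b.coord j x), b.sum_coord_apply_eq_one]
  rw [permuteVertices_apply, ← univ.affineCombination_eq_linear_combination _ _ hw,
    b.coord_apply_combination_of_mem (mem_univ i) hw]

theorem permuteVertices_injective : Function.Injective (b.permuteVertices σ) :=
  fun x y h ↦ b.ext_elem fun i ↦ by
    simpa [coord_permuteVertices] using congrArg (b.coord (σ i)) h

theorem permuteVertices_apply_vertex (i : ι) : b.permuteVertices σ (b i) = b (σ i) := by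
  classical
  refine b.ext_elem fun j ↦ ?_
  simp [coord_permuteVertices, coord_apply, Equiv.symm_apply_eq]

theorem image_permuteVertices_convexHull :
    b.permuteVertices σ '' convexHull ℝ (range b) = convexHull ℝ (range b) := by
  have : b.permuteVertices σ ∘ b = b ∘ σ := funext (b.permuteVertices_apply_vertex σ)
  rw [AffineMap.image_convexHull, ← range_comp, this, σ.surjective.range_comp]

theorem isCompact_convexHull : IsCompact (convexHull ℝ (range b)) :=
  (finite_range b).isCompact_convexHull ℝ

variable [MeasurableSpace E] (μ : Measure E) [μ.IsAddHaarMeasure]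

theorem measure_convexHull_ne_zero : μ (convexHull ℝ (range b)) ≠ 0 :=
  (μ.measure_pos_of_nonempty_interior ⟨_, b.centroid_mem_interior_convexHull⟩).ne'

theorem measure_convexHull_ne_top : μ (convexHull ℝ (range b)) ≠ ⊤ :=
  b.isCompact_convexHull.measure_lt_top.ne

theorem measureReal_convexHull_pos : 0 < μ.real (convexHull ℝ (range b)) :=
  ENNReal.toReal_pos (b.measure_convexHull_ne_zero μ) (b.measure_convexHull_ne_top μ)

variable [BorelSpace E]

theorem integrableOn_convexHull_of_continuous {F : Type*} [NormedAddCommGroup F] {g : E → F}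
    (hg : Continuous g) : IntegrableOn g (convexHull ℝ (range b)) μ :=
  hg.continuousOn.integrableOn_compact b.isCompact_convexHull

variable [FiniteDimensional ℝ E]

theorem setIntegral_coord_convexHull_eq (i j : ι) :
    ∫ x in convexHull ℝ (range b), b.coord i x ∂μ =
      ∫ x in convexHull ℝ (range b), b.coord j x ∂μ := by
  classical
  rw [← setIntegral_comp_affineMap_of_image_eq μ
    b.isCompact_convexHull.isClosed.measurableSet
    (b.permuteVertices_injective (Equiv.swap i j)).injOn
    (b.image_permuteVertices_convexHull _) (b.measure_convexHull_ne_zero μ)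
    (b.measure_convexHull_ne_top μ)]
  simp [coord_permuteVertices]

theorem setIntegral_coord_convexHull (i : ι) :
    ∫ x in convexHull ℝ (range b), b.coord i x ∂μ =
      μ.real (convexHull ℝ (range b)) / Fintype.card ι := by
  have hsum : ∑ j, ∫ x in convexHull ℝ (range b), b.coord j x ∂μ =
      μ.real (convexHull ℝ (range b)) := by
    rw [← integral_finsetSum _ fun j _ ↦ b.integrableOn_convexHull_of_continuous μ
      (continuous_barycentric_coord b j)]
    simp [b.sum_coord_apply_eq_one]
  simp_rw [b.setIntegral_coord_convexHull_eq μ _ i, sum_const, card_univ,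
    nsmul_eq_mul] at hsum
  have := b.nonempty
  rw [← hsum]
  field_simp

theorem setAverage_convexHull_eq_centroid :
    ⨍ x in convexHull ℝ (range b), x ∂μ = univ.centroid ℝ b := by
  have := b.nonempty
  have hmoment : ∫ x in convexHull ℝ (range b), x ∂μ =
      ∑ i, (∫ x in convexHull ℝ (range b), b.coord i x ∂μ) • b i := by
    simp_rw [← integral_smul_const]
    rw [← integral_finsetSum _ fun i _ ↦ (b.integrableOn_convexHull_of_continuous μ
      (continuous_barycentric_coord b i)).smul_const _]
    simp_rw [b.linear_combination_coord_eq_self]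
  rw [centroid_eq_inv_card_smul_sum univ_nonempty, setAverage_eq, hmoment,
    smul_sum, smul_sum]
  simp_rw [setIntegral_coord_convexHull, smul_smul, card_univ]
  have := b.measureReal_convexHull_pos μ
  congr! 2
  field_simp

end AffineBasis

namespace ConvexOn

variable {E : Type*} [NormedAddCommGroup E] [NormedSpace ℝ E] {ι : Type*} [Fintype ι]
  (b : AffineBasis ι ℝ E) {f : E → ℝ}

theorem le_sum_coord_mul (hf : ConvexOn ℝ (convexHull ℝ (range b)) f) {x : E}
    (hx : x ∈ convexHull ℝ (range b)) : f x ≤ ∑ i, b.coord i x * f (b i) := by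
  have hcoord : ∀ i, 0 ≤ b.coord i x := by rwa [b.convexHull_eq_nonneg_coord] at hx
  simpa [b.linear_combination_coord_eq_self] using
    hf.map_sum_le (fun i _ ↦ hcoord i) (b.sum_coord_apply_eq_one x)
      fun i _ ↦ subset_convexHull ℝ _ (mem_range_self i)

variable [FiniteDimensional ℝ E] [MeasurableSpace E] [BorelSpace E] (μ : Measure E)
  [μ.IsAddHaarMeasure]

theorem setAverage_convexHull_le (hf : ConvexOn ℝ (convexHull ℝ (range b)) f)
    (hfi : IntegrableOn f (convexHull ℝ (range b)) μ) :
    ⨍ x in convexHull ℝ (range b), f x ∂μ ≤ (Fintype.card ι : ℝ)⁻¹ * ∑ i, f (b i) := by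
  have hcoord_int : ∀ i, IntegrableOn (fun x ↦ b.coord i x * f (b i)) (convexHull ℝ (range b)) μ :=
    fun i ↦ (b.integrableOn_convexHull_of_continuous μ
      (continuous_barycentric_coord b i)).mul_const _
  have hvol := b.measureReal_convexHull_pos μ
  calc ⨍ x in convexHull ℝ (range b), f x ∂μ
      ≤ ⨍ x in convexHull ℝ (range b), ∑ i, b.coord i x * f (b i) ∂μ := by
        rw [setAverage_eq, setAverage_eq]
        exact smul_le_smul_of_nonneg_left (setIntegral_mono_on hfi (integrable_finsetSum _
          fun i _ ↦ hcoord_int i) b.isCompact_convexHull.isClosed.measurableSet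
          fun x hx ↦ hf.le_sum_coord_mul b hx) (inv_nonneg.2 hvol.le)
    _ = (Fintype.card ι : ℝ)⁻¹ * ∑ i, f (b i) := by
        rw [setAverage_eq, integral_finsetSum _ fun i _ ↦ hcoord_int i, smul_eq_mul, mul_sum, mul_sum]
        simp_rw [integral_mul_const, b.setIntegral_coord_convexHull]
        congr! 1 with i
        field_simp

theorem map_centroid_le_setAverage_convexHull (hf : ConvexOn ℝ (convexHull ℝ (range b)) f)
    (hfi : IntegrableOn f (convexHull ℝ (range b)) μ) :
    f (univ.centroid ℝ b) ≤ ⨍ x in convexHull ℝ (range b), f x ∂μ := by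
  have h := hf.map_setAverage_le_of_mem_interior (f := fun x ↦ x)
    (by rw [b.setAverage_convexHull_eq_centroid]; exact b.centroid_mem_interior_convexHull)
    (b.measure_convexHull_ne_zero μ) (b.measure_convexHull_ne_top μ)
    (ae_restrict_mem b.isCompact_convexHull.isClosed.measurableSet)
    (b.integrableOn_convexHull_of_continuous μ continuous_id) hfi
  rwa [b.setAverage_convexHull_eq_centroid] at h

end ConvexOn

theorem hermite_hadamard_simplex {n : ℕ}
    (p : Fin (n + 1) → EuclideanSpace ℝ (Fin n)) (hp : AffineIndependent ℝ p)
    (S : Set (EuclideanSpace ℝ (Fin n))) (hS : S = convexHull ℝ (Set.range p))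
    (pbar : EuclideanSpace ℝ (Fin n)) (hpbar : pbar = ((n : ℝ) + 1)⁻¹ • ∑ i, p i)
    (f : EuclideanSpace ℝ (Fin n) → ℝ) (hf : ConvexOn ℝ S f)
    (hint : IntegrableOn f S volume) :
    f pbar ≤ ((volume S).toReal)⁻¹ * ∫ x in S, f x ∧
      ((volume S).toReal)⁻¹ * ∫ x in S, f x ≤ ((n : ℝ) + 1)⁻¹ * ∑ i, f (p i) := by
  have hspan : affineSpan ℝ (range p) = ⊤ := by
    rw [hp.affineSpan_eq_top_iff_card_eq_finrank_add_one]
    simp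
  obtain ⟨b, rfl⟩ : ∃ b : AffineBasis (Fin (n + 1)) ℝ (EuclideanSpace ℝ (Fin n)), ⇑b = p :=
    ⟨⟨p, hp, hspan⟩, rfl⟩
  have hpbar_centroid : pbar = univ.centroid ℝ b := by
    rw [hpbar, centroid_eq_inv_card_smul_sum univ_nonempty]
    simp
  have havg : ((volume S).toReal)⁻¹ * ∫ x in S, f x = ⨍ x in S, f x := by
    rw [setAverage_eq, smul_eq_mul, measureReal_def]
  subst hS
  rw [havg, hpbar_centroid]
  exact ⟨hf.map_centroid_le_setAverage_convexHull b volume hint,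
    by simpa using hf.setAverage_convexHull_le b volume hint⟩
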